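/- Let λ be an uncountable regular cardinal and ⟨A_n : n < ω⟩ an increasing chain of infinite subsets of ω with union A. Let ⟨f_α : α < λ⟩ be <*-increasing in A → Ord such that each restriction ⟨f_α ↾ A_n⟩ has an exact upper bound g_n of pointwise cofinality λ. Then there exists g : A → Ord with cf(g(i)) = λ for all i ∈ A and g ↾ A_n =* g_n for every n (equality modulo finite). -/

import Mathlib

open Cardinal Ordinal

/-!
An exact upper bound of a nonempty family is `≤*` every upper bound of it, so on `A m` the exact
upper bounds `gs m` and `gs n` (`m ≤ n`) agree modulo finite. Setting `g i := gs m i` for the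
least `m` with `i ∈ A m` then gives a function that differs from `gs n` on `A n` only at the
finitely many exceptional points of the pairs `(m, n)` with `m ≤ n`.
-/

/-- mod-finite domination on a set `S ⊆ ℕ`. -/
def ltStarOn (S : Set ℕ) (u v : ℕ → Ordinal) : Prop := {i | i ∈ S ∧ ¬ u i < v i}.Finite

section ExactUpperBound

variable {ι : Type*} {f : ι → ℕ → Ordinal} {I : Set ι} {S T : Set ℕ} {u v g g' : ℕ → Ordinal}

theorem ltStarOn.mono (hST : S ⊆ T) (h : ltStarOn T u v) : ltStarOn S u v :=
  h.subset fun _ hi => ⟨hST hi.1, hi.2⟩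

def IsUpperBoundOn (S : Set ℕ) (f : ι → ℕ → Ordinal) (I : Set ι) (g : ℕ → Ordinal) : Prop :=
  ∀ a ∈ I, ltStarOn S (f a) g

def IsExactUpperBoundOn (S : Set ℕ) (f : ι → ℕ → Ordinal) (I : Set ι) (g : ℕ → Ordinal) :
    Prop :=
  IsUpperBoundOn S f I g ∧ ∀ u, ltStarOn S u g → ∃ a ∈ I, ltStarOn S u (f a)

theorem IsUpperBoundOn.mono (hST : S ⊆ T) (h : IsUpperBoundOn T f I g) :
    IsUpperBoundOn S f I g :=
  fun a ha => (h a ha).mono hST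

theorem IsUpperBoundOn.ltStarOn_zero (h : IsUpperBoundOn S f I g) (hI : I.Nonempty) :
    ltStarOn S 0 g :=
  let ⟨a, ha⟩ := hI
  (h a ha).subset fun _ hi => ⟨hi.1, fun hlt => hi.2 (pos_of_gt hlt)⟩

/-- The test function is `g'` where `g' < g` on `S` and `0` elsewhere; it lies `<* g` on `T`,
so it is dominated by some `f a`, which in turn is `<* g'` on `S`. -/
theorem IsExactUpperBoundOn.finite_lt (hg : IsExactUpperBoundOn T f I g) (hI : I.Nonempty)
    (hST : S ⊆ T) (hg' : IsUpperBoundOn S f I g') : {i | i ∈ S ∧ g' i < g i}.Finite := by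
  classical
  set w : ℕ → Ordinal := fun i => if i ∈ S ∧ g' i < g i then g' i else 0
  have hw : ltStarOn T w g := by
    refine (hg.1.ltStarOn_zero hI).subset fun i ⟨hiT, hnlt⟩ => ⟨hiT, fun hpos => hnlt ?_⟩
    by_cases hi : i ∈ S ∧ g' i < g i
    · simpa only [w, if_pos hi] using hi.2
    · simpa only [w, if_neg hi, Pi.zero_apply] using hpos
  obtain ⟨a, ha, hwa⟩ := hg.2 w hw
  refine ((hwa.mono hST).union (hg' a ha)).subset fun i hi => ?_
  have hwi : w i = g' i := if_pos hi
  by_cases hlt : w i < f a i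
  · exact Or.inr ⟨hi.1, (hwi ▸ hlt).not_gt⟩
  · exact Or.inl ⟨hi.1, hlt⟩

theorem IsExactUpperBoundOn.finite_ne (hI : I.Nonempty) (hST : S ⊆ T)
    (hg : IsExactUpperBoundOn S f I g) (hg' : IsExactUpperBoundOn T f I g') :
    {i | i ∈ S ∧ g i ≠ g' i}.Finite := by
  refine ((hg.finite_lt hI subset_rfl (hg'.1.mono hST)).union
    (hg'.finite_lt hI hST hg.1)).subset fun i ⟨hiS, hne⟩ => ?_
  rcases hne.lt_or_gt with hlt | hlt
  · exact Or.inr ⟨hiS, hlt⟩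
  · exact Or.inl ⟨hiS, hlt⟩

end ExactUpperBound

section Glue

variable {α β : Type*} {A : ℕ → Set α} {gs : ℕ → α → β}

open Classical in
/-- Outside `⋃ n, A n` the value `gs 0 i` is an arbitrary filler. -/
noncomputable def glue (A : ℕ → Set α) (gs : ℕ → α → β) (i : α) : β :=
  if h : ∃ n, i ∈ A n then gs (Nat.find h) i else gs 0 i

theorem exists_glue_eq {i : α} (hi : i ∈ ⋃ n, A n) : ∃ m, i ∈ A m ∧ glue A gs i = gs m i := by
  classical
  have h : ∃ n, i ∈ A n := Set.mem_iUnion.mp hi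
  exact ⟨Nat.find h, Nat.find_spec h, by rw [glue, dif_pos h]⟩

theorem finite_glue_ne (hcoh : ∀ m n, m ≤ n → {i | i ∈ A m ∧ gs m i ≠ gs n i}.Finite) (n : ℕ) :
    {i | i ∈ A n ∧ glue A gs i ≠ gs n i}.Finite := by
  classical
  refine ((Set.finite_le_nat n).biUnion fun m hm => hcoh m n hm).subset fun i ⟨hin, hne⟩ => ?_
  have h : ∃ k, i ∈ A k := ⟨n, hin⟩
  rw [glue, dif_pos h] at hne
  exact Set.mem_biUnion (Nat.find_min' h hin) ⟨Nat.find_spec h, hne⟩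

end Glue

theorem stmt_16_general (lam : Cardinal.{0}) (hreg : lam.IsRegular)
    (A : ℕ → Set ℕ) (hmono : ∀ n, A n ⊆ A (n + 1))
    (f : Ordinal → ℕ → Ordinal)
    (gs : ℕ → ℕ → Ordinal)
    (hub : ∀ n, ∀ α < lam.ord, ltStarOn (A n) (f α) (gs n))
    (hexact : ∀ n, ∀ u : ℕ → Ordinal, ltStarOn (A n) u (gs n) →
      ∃ α < lam.ord, ltStarOn (A n) u (f α))
    (hcof : ∀ n, ∀ i ∈ A n, ((gs n) i).cof = lam) :
    ∃ g : ℕ → Ordinal, (∀ i ∈ ⋃ n, A n, (g i).cof = lam) ∧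
      ∀ n, {i | i ∈ A n ∧ g i ≠ gs n i}.Finite := by
  have hA : Monotone A := monotone_nat_of_le_succ hmono
  have hI : (Set.Iio lam.ord).Nonempty := ⟨0, Cardinal.ord_pos.mpr hreg.pos⟩
  have hgs : ∀ n, IsExactUpperBoundOn (A n) f (Set.Iio lam.ord) (gs n) :=
    fun n => ⟨hub n, hexact n⟩
  refine ⟨glue A gs, fun i hi => ?_,
    finite_glue_ne fun m n hmn => (hgs m).finite_ne hI (hA hmn) (hgs n)⟩
  obtain ⟨m, him, hgi⟩ := exists_glue_eq hi
  rw [hgi, hcof m i him]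

/-- gluing exact upper bounds. If each restriction ⟨f_α ↾ A_n⟩ has an exact
upper bound g_n of pointwise cofinality λ, then there is g : A → Ord of pointwise
cofinality λ with g ↾ A_n =* g_n for every n. -/
theorem stmt_16 (lam : Cardinal.{0}) (hreg : lam.IsRegular) (hunc : ℵ₀ < lam)
    (A : ℕ → Set ℕ) (hmono : ∀ n, A n ⊆ A (n + 1)) (hinf : ∀ n, (A n).Infinite)
    (f : Ordinal → ℕ → Ordinal)
    (hf : ∀ α < lam.ord, ∀ β < lam.ord, α < β → ltStarOn (⋃ n, A n) (f α) (f β))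
    (gs : ℕ → ℕ → Ordinal)
    (hub : ∀ n, ∀ α < lam.ord, ltStarOn (A n) (f α) (gs n))
    (hexact : ∀ n, ∀ u : ℕ → Ordinal, ltStarOn (A n) u (gs n) →
      ∃ α < lam.ord, ltStarOn (A n) u (f α))
    (hcof : ∀ n, ∀ i ∈ A n, ((gs n) i).cof = lam) :
    ∃ g : ℕ → Ordinal, (∀ i ∈ ⋃ n, A n, (g i).cof = lam) ∧
      ∀ n, {i | i ∈ A n ∧ g i ≠ gs n i}.Finite :=
  stmt_16_general lam hreg A hmono f gs hub hexact hcof
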